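/- Fix p ∈ (0, 1/2), let C = 1 - H₂(p), and for ε ∈ (0,1) let R = (1-ε)C and δ = H₂⁻¹(1 - R). Define E₀(R, p) = T(δ, p) + R - 1, where T(x, y) = -x·log₂ y - (1-x)·log₂(1-y). Then as ε → 0⁺, E₀(R, p) = c_p · ε² + O(ε³), where c_p = (1 - H₂(p))²·(log₂ e) / (2p(1-p)·(log₂((1-p)/p))²) > 0. -/

import Mathlib

/-- Binary entropy function. -/
noncomputable def H₂ (x : ℝ) : ℝ := -x * Real.logb 2 x - (1 - x) * Real.logb 2 (1 - x)

/-- T(x,y) = -x log₂ y - (1-x) log₂ (1-y). -/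
noncomputable def T (x y : ℝ) : ℝ := -x * Real.logb 2 y - (1 - x) * Real.logb 2 (1 - y)

/-!
Since `H₂(δ) = 1 - R`, we have `E₀ = T(δ, p) - H₂(δ)`, and `T(·, p)` is the tangent line of `H₂` at
`p`. So `E₀` is a Taylor remainder: with `u = δ - p` and some `η ∈ (p, δ)` it equals
`u² / (2 η (1 - η) ln 2)`. On the other hand `εC = H₂(δ) - H₂(p) = L u - E₀` with
`L = H₂'(p) = log₂((1 - p) / p)`, so `u = εC / L + O(u²)`, and `u = O(ε)` by the mean value theorem.
Substituting gives `E₀ = u² / (2 p (1 - p) ln 2) + O(u³) = c_p ε² + O(ε³)`.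
-/

open Real Set

lemma exists_eq_taylor_two {f f' f'' : ℝ → ℝ} {a b : ℝ} (hab : a < b)
    (hf : ∀ x ∈ Icc a b, HasDerivAt f (f' x) x) (hf' : ∀ x ∈ Icc a b, HasDerivAt f' (f'' x) x) :
    ∃ η ∈ Ioo a b, f b = f a + f' a * (b - a) + f'' η * (b - a) ^ 2 / 2 := by
  have hg (t : ℝ) (ht : t ∈ Icc a b) : HasDerivAt (fun t => f t - f' a * t) (f' t - f' a) t :=
    ((hf t ht).sub ((hasDerivAt_id t).const_mul (f' a))).congr_deriv (by ring)
  have hsq (t : ℝ) : HasDerivAt (fun t => (t - a) ^ 2) (2 * (t - a)) t :=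
    (((hasDerivAt_id t).sub_const a).pow 2).congr_deriv (by simp)
  obtain ⟨c, hc, hc_eq⟩ := exists_ratio_hasDerivAt_eq_ratio_slope _ _ hab
    (fun t ht => (hg t ht).continuousAt.continuousWithinAt)
    (fun t ht => hg t (Ioo_subset_Icc_self ht)) _ _
    (fun t _ => (hsq t).continuousAt.continuousWithinAt) (fun t _ => hsq t)
  obtain ⟨η, hη, hη_eq⟩ := exists_hasDerivAt_eq_slope f' f'' hc.1
    (fun t ht => (hf' t ⟨ht.1, ht.2.trans hc.2.le⟩).continuousAt.continuousWithinAt)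
    (fun t ht => hf' t ⟨ht.1.le, (ht.2.trans hc.2).le⟩)
  refine ⟨η, ⟨hη.1, hη.2.trans hc.2⟩, ?_⟩
  have hca : c - a ≠ 0 := sub_ne_zero.2 hc.1.ne'
  rw [hη_eq]
  field_simp
  linear_combination -hc_eq

lemma abs_mul_sq_sub_mul_sq_le {A B W L u x : ℝ} (hL : 0 < L) (hu : 0 ≤ u) (hx : 0 ≤ x)
    (hW : 0 ≤ W) (hWB : W ≤ B) (hBW : B - W ≤ A * u) (hxu : x = L * u - W * u ^ 2 / 2) :
    |W * u ^ 2 / 2 - B * (x / L) ^ 2 / 2| ≤ (A + B ^ 2 / L) / 2 * u ^ 3 := by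
  set v := x / L
  have hB : 0 ≤ B := hW.trans hWB
  have hv : 0 ≤ v := div_nonneg hx hL.le
  have huv : u - v = W * u ^ 2 / (2 * L) := by
    simp only [v, hxu]
    field_simp
    ring
  have hvu : v ≤ u := by
    have : 0 ≤ W * u ^ 2 / (2 * L) := by positivity
    linarith
  have h₁ : (B - W) * u ^ 2 ≤ A * u ^ 3 := by
    calc (B - W) * u ^ 2 ≤ A * u * u ^ 2 := by gcongr
      _ = A * u ^ 3 := by ring
  have h₂ : B * ((u - v) * (u + v)) ≤ B ^ 2 / L * u ^ 3 := by
    calc B * ((u - v) * (u + v)) ≤ B * (B * u ^ 2 / (2 * L) * (2 * u)) := by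
          rw [huv]; gcongr; linarith
      _ = B ^ 2 / L * u ^ 3 := by field_simp
  have h₀ : 0 ≤ (B - W) * u ^ 2 := mul_nonneg (by linarith) (sq_nonneg u)
  have h₀' : 0 ≤ B * ((u - v) * (u + v)) :=
    mul_nonneg hB (mul_nonneg (by linarith) (by linarith))
  have hsplit : W * u ^ 2 / 2 - B * v ^ 2 / 2 =
      (B * ((u - v) * (u + v)) - (B - W) * u ^ 2) / 2 := by
    ring
  rw [hsplit, abs_le]
  constructor <;> linarith

lemma one_div_mul_one_sub_div_log_le {p η : ℝ} (hp : 0 < p) (hpη : p ≤ η) (hη : η ≤ 1 - p) :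
    1 / (η * (1 - η)) / log 2 ≤ 1 / (p * (1 - p)) / log 2 :=
  div_le_div_of_nonneg_right
    (one_div_le_one_div_of_le (mul_pos hp (by linarith)) (by nlinarith)) (log_pos one_lt_two).le

lemma one_div_mul_one_sub_div_log_sub_le {p η : ℝ} (hp : 0 < p) (hpη : p ≤ η) (hη : η ≤ 1 - p) :
    1 / (p * (1 - p)) / log 2 - 1 / (η * (1 - η)) / log 2 ≤
      1 / (p * (1 - p)) ^ 2 / log 2 * (η - p) := by
  have hp' : 0 < p * (1 - p) := mul_pos hp (by linarith)
  have hη' : p * (1 - p) ≤ η * (1 - η) := by nlinarith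
  have hη₀ : 0 < η * (1 - η) := hp'.trans_le hη'
  rw [← sub_div, div_mul_eq_mul_div, div_le_div_iff_of_pos_right (log_pos one_lt_two),
    div_sub_div _ _ hp'.ne' hη₀.ne', div_le_iff₀ (mul_pos hp' hη₀)]
  calc 1 * (η * (1 - η)) - p * (1 - p) * 1 = (η - p) * (1 - η - p) := by ring
    _ ≤ (η - p) * (η * (1 - η) / (p * (1 - p))) := by
        gcongr
        linarith [(one_le_div hp').2 hη']
    _ = 1 / (p * (1 - p)) ^ 2 * (η - p) * (p * (1 - p) * (η * (1 - η))) := by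
        field_simp

lemma H₂_eq_binEntropy_div (x : ℝ) : H₂ x = binEntropy x / log 2 := by
  simp only [H₂, binEntropy, logb, log_inv]
  ring

lemma H₂_strictMonoOn : StrictMonoOn H₂ (Icc 0 (1 / 2)) := by
  intro a ha b hb hab
  simp only [H₂_eq_binEntropy_div, one_div] at *
  exact div_lt_div_of_pos_right (binEntropy_strictMonoOn ha hb hab) (log_pos one_lt_two)

lemma H₂_pos {x : ℝ} (hx₀ : 0 < x) (hx₁ : x < 1) : 0 < H₂ x := by
  rw [H₂_eq_binEntropy_div]
  exact div_pos (binEntropy_pos hx₀ hx₁) (log_pos one_lt_two)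

lemma H₂_lt_one {x : ℝ} (hx : x ≠ 1 / 2) : H₂ x < 1 := by
  rw [H₂_eq_binEntropy_div, div_lt_one (log_pos one_lt_two), binEntropy_lt_log_two]
  simpa using hx

lemma hasDerivAt_H₂ {x : ℝ} (hx₀ : x ≠ 0) (hx₁ : x ≠ 1) :
    HasDerivAt H₂ (logb 2 ((1 - x) / x)) x := by
  rw [funext H₂_eq_binEntropy_div, logb, log_div (sub_ne_zero.2 hx₁.symm) hx₀]
  exact (hasDerivAt_binEntropy hx₀ hx₁).div_const _

lemma hasDerivAt_logb_one_sub_div {x : ℝ} (hx₀ : x ≠ 0) (hx₁ : x ≠ 1) :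
    HasDerivAt (fun t => logb 2 ((1 - t) / t)) (-(1 / (x * (1 - x)) / log 2)) x := by
  have h1x : 1 - x ≠ 0 := sub_ne_zero.2 hx₁.symm
  have hdiv := ((hasDerivAt_id x).const_sub 1).div (hasDerivAt_id x) hx₀
  refine ((hdiv.log (div_ne_zero h1x hx₀)).div_const (log 2)).congr_deriv ?_
  simp only [id, Pi.div_apply]
  field_simp
  ring

lemma T_eq_H₂_add (x : ℝ) {y : ℝ} (hy₀ : y ≠ 0) (hy₁ : y ≠ 1) :
    T x y = H₂ y + (x - y) * logb 2 ((1 - y) / y) := by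
  rw [logb_div (sub_ne_zero.2 hy₁.symm) hy₀]
  simp only [T, H₂]
  ring

lemma sub_mul_logb_le_H₂_sub {p d q : ℝ} (hp : 0 < p) (hpd : p < d) (hdq : d ≤ q) (hq : q < 1) :
    (d - p) * logb 2 ((1 - q) / q) ≤ H₂ d - H₂ p := by
  have hderiv (t : ℝ) (ht : t ∈ Icc p d) : HasDerivAt H₂ (logb 2 ((1 - t) / t)) t :=
    hasDerivAt_H₂ (hp.trans_le ht.1).ne' (by linarith [ht.2])
  obtain ⟨ζ, hζ, hζ_eq⟩ := exists_hasDerivAt_eq_slope H₂ (fun t => logb 2 ((1 - t) / t)) hpd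
    (fun t ht => (hderiv t ht).continuousAt.continuousWithinAt)
    (fun t ht => hderiv t (Ioo_subset_Icc_self ht))
  have hζ₀ : 0 < ζ := hp.trans hζ.1
  have hmono : logb 2 ((1 - q) / q) ≤ logb 2 ((1 - ζ) / ζ) := by
    refine logb_le_logb_of_le one_lt_two (div_pos (by linarith) (by linarith)) ?_
    rw [div_le_div_iff₀ (by linarith) hζ₀]
    nlinarith [hζ.2]
  rw [hζ_eq, le_div_iff₀ (sub_pos.2 hpd)] at hmono
  linarith

lemma exists_T_sub_H₂_eq {p d : ℝ} (hp : 0 < p) (hpd : p < d) (hd : d < 1) :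
    ∃ η ∈ Ioo p d, T d p - H₂ d = 1 / (η * (1 - η)) / log 2 * (d - p) ^ 2 / 2 := by
  obtain ⟨η, hη, hη_eq⟩ := exists_eq_taylor_two hpd
    (fun t ht => hasDerivAt_H₂ (hp.trans_le ht.1).ne' (by linarith [ht.2]))
    (fun t ht => hasDerivAt_logb_one_sub_div (hp.trans_le ht.1).ne' (by linarith [ht.2]))
  refine ⟨η, hη, ?_⟩
  rw [T_eq_H₂_add d hp.ne' (by linarith), hη_eq]
  ring

lemma exists_abs_T_sub_H₂_sub_le_of_mem_Ioc {p q : ℝ} (hp : 0 < p) (hpq : p < q) (hq : q < 1 / 2) :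
    ∃ K > 0, ∀ d ∈ Ioc p q,
      |(T d p - H₂ d) - (H₂ d - H₂ p) ^ 2 * logb 2 (exp 1)
          / (2 * p * (1 - p) * logb 2 ((1 - p) / p) ^ 2)| ≤ K * (H₂ d - H₂ p) ^ 3 := by
  obtain ⟨L, hL_def, hL⟩ : ∃ L, logb 2 ((1 - p) / p) = L ∧ 0 < L :=
    ⟨_, rfl, logb_pos one_lt_two (by rw [lt_div_iff₀ hp]; linarith)⟩
  obtain ⟨m, hm_def, hm⟩ : ∃ m, logb 2 ((1 - q) / q) = m ∧ 0 < m :=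
    ⟨_, rfl, logb_pos one_lt_two (by rw [lt_div_iff₀ (by linarith)]; linarith)⟩
  have hpp : 0 < p * (1 - p) := mul_pos hp (by linarith)
  set B := 1 / (p * (1 - p)) / log 2
  set A := 1 / (p * (1 - p)) ^ 2 / log 2
  have hB : 0 < B := div_pos (one_div_pos.2 hpp) (log_pos one_lt_two)
  have hA : 0 < A := div_pos (one_div_pos.2 (pow_pos hpp 2)) (log_pos one_lt_two)
  refine ⟨(A + B ^ 2 / L) / 2 / m ^ 3, by positivity, fun d ⟨hpd, hdq⟩ => ?_⟩
  obtain ⟨η, hη, hTη⟩ := exists_T_sub_H₂_eq hp hpd (by linarith)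
  have hx : H₂ d - H₂ p = L * (d - p) - 1 / (η * (1 - η)) / log 2 * (d - p) ^ 2 / 2 := by
    rw [T_eq_H₂_add d hp.ne' (by linarith), hL_def] at hTη
    linarith
  have hx₀ : 0 ≤ H₂ d - H₂ p := (sub_pos.2 (H₂_strictMonoOn ⟨hp.le, by linarith⟩
    ⟨by linarith, by linarith⟩ hpd)).le
  have hu : (d - p) * m ≤ H₂ d - H₂ p := hm_def ▸ sub_mul_logb_le_H₂_sub hp hpd hdq (by linarith)
  have hηp : p ≤ η := hη.1.le
  have hη1 : η ≤ 1 - p := by linarith [hη.2]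
  have hW : 0 ≤ 1 / (η * (1 - η)) / log 2 :=
    div_nonneg (one_div_nonneg.2 (mul_nonneg (by linarith) (by linarith))) (log_pos one_lt_two).le
  have hBW : B - 1 / (η * (1 - η)) / log 2 ≤ A * (d - p) :=
    (one_div_mul_one_sub_div_log_sub_le hp hηp hη1).trans (by gcongr; exact hη.2.le)
  calc _ = |1 / (η * (1 - η)) / log 2 * (d - p) ^ 2 / 2 - B * ((H₂ d - H₂ p) / L) ^ 2 / 2| := by
        rw [hTη, hL_def, logb, log_exp]
        congr 1
        simp only [B]
        field_simp
    _ ≤ (A + B ^ 2 / L) / 2 * (d - p) ^ 3 := abs_mul_sq_sub_mul_sq_le hL (sub_pos.2 hpd).le hx₀ hW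
        (one_div_mul_one_sub_div_log_le hp hηp hη1) hBW hx
    _ ≤ (A + B ^ 2 / L) / 2 / m ^ 3 * (H₂ d - H₂ p) ^ 3 := by
        rw [div_mul_eq_mul_div _ (m ^ 3), le_div_iff₀ (by positivity), mul_assoc, ← mul_pow]
        gcongr

lemma exists_abs_T_sub_H₂_sub_le {p : ℝ} (hp₀ : 0 < p) (hp : p < 1 / 2) :
    ∃ K > 0, ∃ δ > 0, ∀ d ∈ Icc (0 : ℝ) (1 / 2), H₂ p < H₂ d → H₂ d - H₂ p < δ →
      |(T d p - H₂ d) - (H₂ d - H₂ p) ^ 2 * logb 2 (exp 1)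
          / (2 * p * (1 - p) * logb 2 ((1 - p) / p) ^ 2)| ≤ K * (H₂ d - H₂ p) ^ 3 := by
  obtain ⟨q, hpq, hq⟩ : ∃ q, p < q ∧ q < 1 / 2 := ⟨(p + 1 / 2) / 2, by linarith, by linarith⟩
  obtain ⟨K, hK, hKd⟩ := exists_abs_T_sub_H₂_sub_le_of_mem_Ioc hp₀ hpq hq
  have hp_mem : p ∈ Icc (0 : ℝ) (1 / 2) := ⟨hp₀.le, hp.le⟩
  have hq_mem : q ∈ Icc (0 : ℝ) (1 / 2) := ⟨by linarith, hq.le⟩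
  refine ⟨K, hK, H₂ q - H₂ p, sub_pos.2 (H₂_strictMonoOn hp_mem hq_mem hpq),
    fun d hd hpd hdq => hKd d ⟨?_, ?_⟩⟩
  · exact (H₂_strictMonoOn.lt_iff_lt hp_mem hd).1 hpd
  · exact (H₂_strictMonoOn.le_iff_le hd hq_mem).1 (by linarith)

theorem stmt_5_general (p : ℝ) (hp0 : 0 < p) (hp : p < 1/2)
    (Hinv : ℝ → ℝ)
    (hinv_mem : ∀ y ∈ Set.Icc (0 : ℝ) 1, Hinv y ∈ Set.Icc (0 : ℝ) (1/2))
    (hinv_right : ∀ y ∈ Set.Icc (0 : ℝ) 1, H₂ (Hinv y) = y)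
    (C : ℝ) (hC : C = 1 - H₂ p)
    (c_p : ℝ)
    (hc_p : c_p = (1 - H₂ p) ^ 2 * Real.logb 2 (Real.exp 1)
        / (2 * p * (1 - p) * (Real.logb 2 ((1 - p) / p)) ^ 2)) :
    c_p > 0 ∧
    ∃ K > 0, ∃ δ > 0, ∀ ε : ℝ, 0 < ε → ε < δ →
      |(T (Hinv (1 - (1 - ε) * C)) p + (1 - ε) * C - 1) - c_p * ε ^ 2| ≤ K * ε ^ 3 := by
  have hC₀ : 0 < C := by linarith [H₂_lt_one hp.ne]
  have hC₁ : C < 1 := by linarith [H₂_pos hp0 (by linarith)]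
  have hL : 0 < logb 2 ((1 - p) / p) := logb_pos one_lt_two (by rw [lt_div_iff₀ hp0]; linarith)
  have hlogb : 0 < logb 2 (exp 1) := logb_pos one_lt_two (one_lt_exp_iff.2 one_pos)
  have h1p : 0 < 1 - p := by linarith
  refine ⟨by rw [hc_p, ← hC]; positivity, ?_⟩
  obtain ⟨K, hK, δ, hδ, hKd⟩ := exists_abs_T_sub_H₂_sub_le hp0 hp
  refine ⟨K * C ^ 3, by positivity, min 1 (δ / C), lt_min one_pos (div_pos hδ hC₀),
    fun ε hε hεδ => ?_⟩
  have hε₁ : ε < 1 := hεδ.trans_le (min_le_left _ _)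
  have hεC : ε * C < δ := (lt_div_iff₀ hC₀).1 (hεδ.trans_le (min_le_right _ _))
  have hy_mem : 1 - (1 - ε) * C ∈ Icc (0 : ℝ) 1 := ⟨by nlinarith, by nlinarith⟩
  set d := Hinv (1 - (1 - ε) * C)
  have hHd : H₂ d = H₂ p + ε * C := by rw [hinv_right _ hy_mem, hC]; ring
  calc _ = |(T d p - H₂ d) - (H₂ d - H₂ p) ^ 2 * logb 2 (exp 1)
          / (2 * p * (1 - p) * logb 2 ((1 - p) / p) ^ 2)| := by
        rw [hHd, hc_p, hC]
        congr 1
        ring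
    _ ≤ K * (H₂ d - H₂ p) ^ 3 :=
        hKd _ (hinv_mem _ hy_mem) (by nlinarith) (by linarith)
    _ = K * C ^ 3 * ε ^ 3 := by rw [hHd]; ring

theorem stmt_5 (p : ℝ) (hp0 : 0 < p) (hp : p < 1/2)
    (Hinv : ℝ → ℝ)
    (hinv_mem : ∀ y ∈ Set.Icc (0 : ℝ) 1, Hinv y ∈ Set.Icc (0 : ℝ) (1/2))
    (hinv_left : ∀ x ∈ Set.Icc (0 : ℝ) (1/2), Hinv (H₂ x) = x)
    (hinv_right : ∀ y ∈ Set.Icc (0 : ℝ) 1, H₂ (Hinv y) = y)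
    (C : ℝ) (hC : C = 1 - H₂ p)
    (c_p : ℝ)
    (hc_p : c_p = (1 - H₂ p) ^ 2 * Real.logb 2 (Real.exp 1)
        / (2 * p * (1 - p) * (Real.logb 2 ((1 - p) / p)) ^ 2)) :
    c_p > 0 ∧
    ∃ K > 0, ∃ δ > 0, ∀ ε : ℝ, 0 < ε → ε < δ →
      |(T (Hinv (1 - (1 - ε) * C)) p + (1 - ε) * C - 1) - c_p * ε ^ 2| ≤ K * ε ^ 3 :=
  stmt_5_general p hp0 hp Hinv hinv_mem hinv_right C hC c_p hc_p
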